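/- Let a, a' be real numbers with |a| > 1 and |a'| > 1, and let σ², σ'² > 0. For λ, u, v ∈ ℝ define 2π·g_{a,σ²}(λ;u,v) = exp(−(σ²/2)(u² + v²)(a^{−2} + 1))·[exp(−σ²·u·v·(a^{−2} + 1)) − 1 + 2(exp(σ²·u·v·a^{−1}) − 1)·cos λ]. If g_{a,σ²}(λ;u,v) = g_{a',σ'²}(λ;u,v) for all λ, u, v ∈ ℝ, then a = a' and σ² = σ'². -/

import Mathlib

open Real

/-- The generalized spectrum of the Gaussian MA(1) model with coefficient `a`
(`|a| > 1`) and innovation variance `σ2`. -/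
noncomputable def gaussMA1Spec (a σ2 : ℝ) (lam u v : ℝ) : ℝ :=
  (1 / (2 * Real.pi)) *
    (Real.exp (-(σ2 / 2) * (u ^ 2 + v ^ 2) * (a ^ (-2 : ℤ) + 1)) *
      (Real.exp (-(σ2 * u * v * (a ^ (-2 : ℤ) + 1))) - 1
        + 2 * (Real.exp (σ2 * u * v * a⁻¹) - 1) * Real.cos lam))

/-!
The generalized spectrum of a centered Gaussian process depends only on its autocovariances, and
for MA(1) these are `γ₀ = σ²(1 + a⁻²)` and `γ₁ = -σ² a⁻¹`. The spectrum returns `γ₀` at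
`(λ, u, v) = (π/2, 1, -1)`, and then `γ₁` from the `cos λ` coefficient at `u = v = 1`.
With `b = a⁻¹`, the equations `σ²(b² + 1) = σ'²(b'² + 1)` and `σ² b = σ'² b'` give
`σ²(b - b')(b b' - 1) = 0`, and `b b' ≠ 1` because `|b|, |b'| < 1`.
-/

/-- The generalized spectrum (times `2π`) of a centered Gaussian process whose autocovariances
vanish beyond lag one, in terms of `γ₀ = Var Zₜ` and `γ₁ = Cov(Zₜ, Zₜ₊₁)`. -/
noncomputable def gaussLagOneSpec (γ₀ γ₁ lam u v : ℝ) : ℝ :=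
  exp (-(γ₀ / 2) * (u ^ 2 + v ^ 2)) *
    (exp (-(γ₀ * u * v)) - 1 + 2 * (exp (-(γ₁ * u * v)) - 1) * cos lam)

theorem gaussMA1Spec_eq_gaussLagOneSpec (a σ2 lam u v : ℝ) :
    gaussMA1Spec a σ2 lam u v =
      (2 * π)⁻¹ * gaussLagOneSpec (σ2 * (a⁻¹ ^ 2 + 1)) (-(σ2 * a⁻¹)) lam u v := by
  simp only [gaussMA1Spec, gaussLagOneSpec, one_div, zpow_neg, zpow_ofNat, inv_pow]
  ring_nf

theorem gaussLagOneSpec_pi_div_two_one_neg_one (γ₀ γ₁ : ℝ) :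
    gaussLagOneSpec γ₀ γ₁ (π / 2) 1 (-1) = 1 - exp (-γ₀) := by
  simp only [gaussLagOneSpec, cos_pi_div_two]
  rw [show -(γ₀ / 2) * ((1 : ℝ) ^ 2 + (-1) ^ 2) = -γ₀ by ring,
    show -(γ₀ * 1 * -1) = γ₀ by ring, mul_zero, add_zero, mul_sub, ← exp_add, neg_add_cancel,
    exp_zero, mul_one]

theorem gaussLagOneSpec_zero_sub_pi_div_two (γ₀ γ₁ : ℝ) :
    gaussLagOneSpec γ₀ γ₁ 0 1 1 - gaussLagOneSpec γ₀ γ₁ (π / 2) 1 1 =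
      2 * exp (-γ₀) * (exp (-γ₁) - 1) := by
  simp only [gaussLagOneSpec, cos_zero, cos_pi_div_two]
  ring_nf

theorem gaussLagOneSpec_injective {γ₀ γ₁ γ₀' γ₁' : ℝ}
    (h : gaussLagOneSpec γ₀ γ₁ = gaussLagOneSpec γ₀' γ₁') : γ₀ = γ₀' ∧ γ₁ = γ₁' := by
  have hγ₀ : γ₀ = γ₀' := by
    have := congrFun (congrFun (congrFun h (π / 2)) 1) (-1)
    simpa [gaussLagOneSpec_pi_div_two_one_neg_one] using this
  refine ⟨hγ₀, ?_⟩
  have := gaussLagOneSpec_zero_sub_pi_div_two γ₀ γ₁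
  rw [h, gaussLagOneSpec_zero_sub_pi_div_two, hγ₀] at this
  simpa [(exp_pos _).ne', eq_comm] using this

theorem eq_of_mul_sq_add_one_eq_of_mul_eq {b b' s s' : ℝ} (hb : |b| < 1) (hb' : |b'| < 1)
    (hs : s ≠ 0) (h₀ : s * (b ^ 2 + 1) = s' * (b' ^ 2 + 1)) (h₁ : s * b = s' * b') :
    b = b' ∧ s = s' := by
  have hbb' : b * b' < 1 := (le_abs_self _).trans_lt <| by
    rw [abs_mul]
    exact mul_lt_one_of_nonneg_of_lt_one_left (abs_nonneg b) hb hb'.le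
  have key : s * ((b - b') * (b * b' - 1)) = 0 := by
    linear_combination b' * h₀ - (b' ^ 2 + 1) * h₁
  have hbeq : b = b' := by
    simpa [hs, hbb'.ne, sub_eq_zero] using key
  subst hbeq
  exact ⟨rfl, mul_right_cancel₀ (by positivity) h₀⟩

theorem gaussMA1_identifiable_general (a a' σ2 σ2' : ℝ) (ha : 1 < |a|) (ha' : 1 < |a'|)
    (hσ : 0 < σ2)
    (h : ∀ lam u v : ℝ, gaussMA1Spec a σ2 lam u v = gaussMA1Spec a' σ2' lam u v) :
    a = a' ∧ σ2 = σ2' := by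
  have hspec : gaussLagOneSpec (σ2 * (a⁻¹ ^ 2 + 1)) (-(σ2 * a⁻¹)) =
      gaussLagOneSpec (σ2' * (a'⁻¹ ^ 2 + 1)) (-(σ2' * a'⁻¹)) := by
    funext lam u v
    have := h lam u v
    rw [gaussMA1Spec_eq_gaussLagOneSpec, gaussMA1Spec_eq_gaussLagOneSpec] at this
    exact mul_left_cancel₀ (by positivity) this
  obtain ⟨hγ₀, hγ₁⟩ := gaussLagOneSpec_injective hspec
  have hinv {x : ℝ} (hx : 1 < |x|) : |x⁻¹| < 1 := by
    rw [abs_inv]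
    exact inv_lt_one_of_one_lt₀ hx
  obtain ⟨hb, hs⟩ := eq_of_mul_sq_add_one_eq_of_mul_eq (hinv ha) (hinv ha') hσ.ne' hγ₀
    (neg_inj.mp hγ₁)
  exact ⟨inv_inj.mp hb, hs⟩

/-- Identifiability of the Gaussian MA(1) model from its generalized spectrum. -/
theorem gaussMA1_identifiable (a a' σ2 σ2' : ℝ) (ha : 1 < |a|) (ha' : 1 < |a'|)
    (hσ : 0 < σ2) (hσ' : 0 < σ2')
    (h : ∀ lam u v : ℝ, gaussMA1Spec a σ2 lam u v = gaussMA1Spec a' σ2' lam u v) :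
    a = a' ∧ σ2 = σ2' :=
  gaussMA1_identifiable_general a a' σ2 σ2' ha ha' hσ h
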